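/- arXiv:chao-dyn/9910010 — 8 statements merged into one kernel-verified Lean document; each statement's English description precedes it below -/
import Mathlib

section
/- The map h_ν(θ) = (2/π) arctan( ((ν+1)tan(πθ/2) + (ν-1)) / ((ν-1)tan(πθ/2) + (ν+1)) ) satisfies the composition law h_ν ∘ h_μ = h_{νμ} on the interval (-1/2, 1/2), for all ν, μ > 0. -/
/-!
Writing `t = tan (π θ / 2)`, the map `h ν` becomes the Möbius transformation
`m ν t = ((ν + 1) t + (ν - 1)) / ((ν - 1) t + (ν + 1))`. Under the Cayley transform
`t ↦ (1 + t) / (1 - t)` this is the dilation by `ν`, so `m ν ∘ m μ = m (ν * μ)`; the only care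
needed is that the inner denominator `(μ - 1) t + (μ + 1)` is positive when `μ > 0` and `|t| < 1`.
-/

open Real

noncomputable def h (ν θ : ℝ) : ℝ :=
  (2 / π) * arctan (((ν + 1) * tan (π * θ / 2) + (ν - 1)) /
    ((ν - 1) * tan (π * θ / 2) + (ν + 1)))

open Set

noncomputable def mobius (ν t : ℝ) : ℝ :=
  ((ν + 1) * t + (ν - 1)) / ((ν - 1) * t + (ν + 1))

lemma mobius_mobius (ν μ t : ℝ) (ht : (μ - 1) * t + (μ + 1) ≠ 0) :
    mobius ν (mobius μ t) = mobius (ν * μ) t := by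
  have num : (ν + 1) * ((μ + 1) * t + (μ - 1)) + (ν - 1) * ((μ - 1) * t + (μ + 1)) =
      2 * ((ν * μ + 1) * t + (ν * μ - 1)) := by ring
  have den : (ν - 1) * ((μ + 1) * t + (μ - 1)) + (ν + 1) * ((μ - 1) * t + (μ + 1)) =
      2 * ((ν * μ - 1) * t + (ν * μ + 1)) := by ring
  have affine (a b : ℝ) : a * (((μ + 1) * t + (μ - 1)) / ((μ - 1) * t + (μ + 1))) + b =
      (a * ((μ + 1) * t + (μ - 1)) + b * ((μ - 1) * t + (μ + 1))) / ((μ - 1) * t + (μ + 1)) := by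
    rw [mul_div_assoc', div_add' _ _ _ ht]
  rw [mobius, mobius, affine, affine, div_div_div_cancel_right₀ ht, num, den,
    mul_div_mul_left _ _ two_ne_zero, mobius]

lemma mobius_denom_pos {μ t : ℝ} (hμ : 0 < μ) (ht : t ∈ Ioo (-1 : ℝ) 1) :
    0 < (μ - 1) * t + (μ + 1) := by
  obtain ⟨h₁, h₂⟩ := ht
  nlinarith

lemma tan_mem_Ioo_neg_one_one {x : ℝ} (hx : x ∈ Ioo (-(π / 4)) (π / 4)) :
    tan x ∈ Ioo (-1 : ℝ) 1 := by
  obtain ⟨h₁, h₂⟩ := hx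
  have hπ := pi_pos
  constructor
  · simpa [tan_neg, tan_pi_div_four] using
      tan_lt_tan_of_lt_of_lt_pi_div_two (by linarith) (by linarith) h₁
  · simpa [tan_pi_div_four] using
      tan_lt_tan_of_lt_of_lt_pi_div_two (by linarith) (by linarith) h₂

lemma h_eq_arctan_mobius (ν θ : ℝ) : h ν θ = 2 / π * arctan (mobius ν (tan (π * θ / 2))) :=
  rfl

lemma tan_pi_mul_h_div_two (ν θ : ℝ) :
    tan (π * h ν θ / 2) = mobius ν (tan (π * θ / 2)) := by
  rw [h_eq_arctan_mobius, show π * (2 / π * arctan _) / 2 = arctan _ by field_simp, tan_arctan]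

theorem h_comp_general (ν μ : ℝ) (hμ : 0 < μ)
    (θ : ℝ) (hθ : θ ∈ Set.Ioo (-(1:ℝ)/2) (1/2)) :
    h ν (h μ θ) = h (ν * μ) θ := by
  have ht : tan (π * θ / 2) ∈ Ioo (-1 : ℝ) 1 := by
    apply tan_mem_Ioo_neg_one_one
    obtain ⟨h₁, h₂⟩ := hθ
    constructor <;> nlinarith [pi_pos]
  rw [h_eq_arctan_mobius, tan_pi_mul_h_div_two, mobius_mobius _ _ _ (mobius_denom_pos hμ ht).ne',
    h_eq_arctan_mobius]

theorem h_comp (ν μ : ℝ) (hν : 0 < ν) (hμ : 0 < μ)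
    (θ : ℝ) (hθ : θ ∈ Set.Ioo (-(1:ℝ)/2) (1/2)) :
    h ν (h μ θ) = h (ν * μ) θ :=
  h_comp_general ν μ hμ θ hθ
end

section
/- For all ν > 0 and θ ∈ (-1/2, 1/2), h_ν(-θ) = -h_{1/ν}(θ). -/
open Real

theorem h_neg (ν : ℝ) (hν : 0 < ν) (θ : ℝ) (hθ : θ ∈ Set.Ioo (-(1:ℝ)/2) (1/2)) :
    h ν (-θ) = -h (1 / ν) θ := by
  have hν' : ν ≠ 0 := hν.ne'
  unfold h
  have ht : tan (π * -θ / 2) = -tan (π * θ / 2) := by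
    rw [show π * -θ / 2 = -(π * θ / 2) by ring, Real.tan_neg]
  rw [ht]
  set t := tan (π * θ / 2) with htdef
  have hnum : (ν + 1) * -t + (ν - 1) = -(ν * ((1/ν + 1) * t + (1/ν - 1))) := by
    field_simp; ring
  have hden : (ν - 1) * -t + (ν + 1) = ν * ((1/ν - 1) * t + (1/ν + 1)) := by
    field_simp; ring
  rw [hnum, hden, neg_div, mul_div_mul_left _ _ hν', Real.arctan_neg]
  ring
end

section
/- For 0 < δ < 1 and ν = (1-√δ)/(1+√δ), and for all θ ∈ (-1/2, 1/2), the identity tan( (π/2)(θ - h_ν(θ)) ) = √δ cos(πθ) / (1 - √δ sin(πθ)) holds. -/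
open Real

/-! With `t = tan (πθ/2)` and `s = √δ`, the Möbius map in `h` becomes `t ↦ (t - s) / (1 - s t)`,
so `π/2 · (θ - h θ) = πθ/2 - arctan ((t - s) / (1 - s t))`. The subtraction formula for `tan`
turns the left-hand side into a rational function of `t`, and the half-angle formulas
`cos (πθ) = (1 - t²) / (1 + t²)`, `sin (πθ) = 2t / (1 + t²)` identify it with the right-hand side. -/

theorem Real.tan_sub_arctan {x : ℝ} (hx : cos x ≠ 0) (u : ℝ) :
    tan (x - arctan u) = (tan x - u) / (1 + tan x * u) := by
  simpa only [tan_arctan] using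
    tan_sub' ⟨cos_ne_zero_iff.1 hx, cos_ne_zero_iff.1 (cos_arctan_pos u).ne'⟩

theorem h_one_sub_div_one_add {s : ℝ} (hs : 1 + s ≠ 0) (θ : ℝ) :
    h ((1 - s) / (1 + s)) θ =
      2 / π * arctan ((tan (π * θ / 2) - s) / (1 - s * tan (π * θ / 2))) := by
  set t := tan (π * θ / 2)
  have hc : 2 / (1 + s) ≠ 0 := div_ne_zero two_ne_zero hs
  have hnum : ((1 - s) / (1 + s) + 1) * t + ((1 - s) / (1 + s) - 1) = 2 / (1 + s) * (t - s) := by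
    field_simp; ring
  have hden : ((1 - s) / (1 + s) - 1) * t + ((1 - s) / (1 + s) + 1) =
      2 / (1 + s) * (1 - s * t) := by
    field_simp; ring
  rw [h, hnum, hden, mul_div_mul_left _ _ hc]

theorem sub_mobius_div_one_add_mul_mobius {s t : ℝ} (hst : s * t ≠ 1) :
    (t - (t - s) / (1 - s * t)) / (1 + t * ((t - s) / (1 - s * t))) =
      s * ((1 - t ^ 2) / (1 + t ^ 2)) / (1 - s * (2 * t / (1 + t ^ 2))) := by
  have h₁ : 1 - s * t ≠ 0 := sub_ne_zero.2 (Ne.symm hst)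
  have h₂ : 1 + t ^ 2 ≠ 0 := by positivity
  rw [show t - (t - s) / (1 - s * t) = s * (1 - t ^ 2) / (1 - s * t) by
      rw [eq_div_iff h₁, sub_mul, div_mul_cancel₀ _ h₁]; ring,
    show 1 + t * ((t - s) / (1 - s * t)) = (1 + t ^ 2 - 2 * s * t) / (1 - s * t) by
      rw [eq_div_iff h₁, add_mul, mul_assoc, div_mul_cancel₀ _ h₁]; ring,
    show s * ((1 - t ^ 2) / (1 + t ^ 2)) = s * (1 - t ^ 2) / (1 + t ^ 2) by ring,
    show 1 - s * (2 * t / (1 + t ^ 2)) = (1 + t ^ 2 - 2 * s * t) / (1 + t ^ 2) by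
      field_simp,
    div_div_div_cancel_right₀ h₁, div_div_div_cancel_right₀ h₂]

theorem tan_theta_sub_h_general (δ : ℝ) (hδ1 : δ < 1)
    (θ : ℝ) (hθ : θ ∈ Set.Ioo (-(1:ℝ)/2) (1/2)) :
    tan (π / 2 * (θ - h ((1 - Real.sqrt δ) / (1 + Real.sqrt δ)) θ)) =
      Real.sqrt δ * cos (π * θ) / (1 - Real.sqrt δ * sin (π * θ)) := by
  obtain ⟨hθ₁, hθ₂⟩ := hθ
  set s := √δ
  set t := tan (π * θ / 2)
  have hs₀ : 0 ≤ s := sqrt_nonneg δ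
  have hs₁ : s < 1 := (sqrt_lt' one_pos).2 (by simpa using hδ1)
  have hπ := pi_pos
  have hcos : 0 < cos (π * θ) := cos_pos_of_mem_Ioo ⟨by nlinarith, by nlinarith⟩
  have hcos_half : cos (π * θ / 2) ≠ 0 := (cos_pos_of_mem_Ioo ⟨by nlinarith, by nlinarith⟩).ne'
  have ht : t < 1 := by
    simpa using tan_lt_tan_of_lt_of_lt_pi_div_two (by nlinarith) (by linarith)
      (show π * θ / 2 < π / 4 by nlinarith)
  have hst : s * t ≠ 1 := by
    rcases le_or_gt t 0 with h0 | h0 <;> nlinarith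
  have hangle : π / 2 * (θ - 2 / π * arctan ((t - s) / (1 - s * t))) =
      π * θ / 2 - arctan ((t - s) / (1 - s * t)) := by
    field_simp
  rw [h_one_sub_div_one_add (by positivity), hangle, tan_sub_arctan hcos_half,
    sub_mobius_div_one_add_mul_mobius hst,
    cos_eq_two_mul_tan_half_div_one_sub_tan_half_sq _ (by linarith),
    sin_eq_two_mul_tan_half_div_one_add_tan_half_sq, mul_div_assoc]

theorem tan_theta_sub_h (δ : ℝ) (hδ : 0 < δ) (hδ1 : δ < 1)
    (θ : ℝ) (hθ : θ ∈ Set.Ioo (-(1:ℝ)/2) (1/2)) :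
    tan (π / 2 * (θ - h ((1 - Real.sqrt δ) / (1 + Real.sqrt δ)) θ)) =
      Real.sqrt δ * cos (π * θ) / (1 - Real.sqrt δ * sin (π * θ)) :=
  tan_theta_sub_h_general δ hδ1 θ hθ
end

section
/- For 0 < δ < 1, ν = (1-√δ)/(1+√δ), and θ ∈ (-1/2, 1/2), the quantity 0 < θ - h_ν(θ) < 1; i.e., the forward map on the saddle connection moves points to the left on the upper branch (equivalently, the momentum χ⁺(θ) = θ - h_ν(θ) is strictly positive on the open interval). -/
open Real

theorem chi_plus_pos (δ : ℝ) (hδ : 0 < δ) (hδ1 : δ < 1)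
    (θ : ℝ) (hθ : θ ∈ Set.Ioo (-(1:ℝ)/2) (1/2)) :
    0 < θ - h ((1 - Real.sqrt δ) / (1 + Real.sqrt δ)) θ ∧
    θ - h ((1 - Real.sqrt δ) / (1 + Real.sqrt δ)) θ < 1 := by
  obtain ⟨hθl, hθr⟩ := hθ
  have hπ : (0:ℝ) < π := Real.pi_pos
  set s := Real.sqrt δ with hs
  have hs0 : 0 < s := Real.sqrt_pos.mpr hδ
  have hs1 : s < 1 := by
    nlinarith [Real.sq_sqrt hδ.le, Real.sqrt_nonneg δ]
  set ν := (1 - s) / (1 + s) with hν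
  have h1s : (0:ℝ) < 1 + s := by linarith
  -- bounds on the angle
  have hx1 : -(π/2) < π * θ / 2 := by nlinarith
  have hx2 : π * θ / 2 < π/2 := by nlinarith
  have hx1' : -(π/4) < π * θ / 2 := by nlinarith
  have hx2' : π * θ / 2 < π/4 := by nlinarith
  set T := Real.tan (π * θ / 2) with hT
  have hT1 : T < 1 := by
    rw [hT, ← Real.tan_pi_div_four]
    exact Real.tan_lt_tan_of_lt_of_lt_pi_div_two hx1 (by linarith) hx2'
  have hTm1 : -1 < T := by
    have : Real.tan (-(π/4)) < T :=
      Real.tan_lt_tan_of_lt_of_lt_pi_div_two (by linarith) hx2 hx1'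
    rwa [Real.tan_neg, Real.tan_pi_div_four] at this
  have hden : 0 < 1 - s * T := by nlinarith
  -- rewrite the argument
  have harg : ((ν + 1) * T + (ν - 1)) / ((ν - 1) * T + (ν + 1))
      = (T - s) / (1 - s * T) := by
    rw [hν]
    rw [div_eq_div_iff]
    · field_simp
      ring
    · have : (1 - s)/(1 + s) - 1 = (-2*s)/(1+s) := by field_simp; ring
      have h2 : ((1 - s)/(1 + s) - 1) * T + ((1 - s)/(1 + s) + 1)
          = (2 * (1 - s * T)) / (1 + s) := by field_simp; ring
      rw [h2]
      positivity
    · linarith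
  have hθeq : π * θ / 2 = Real.arctan T := by
    rw [hT, Real.arctan_tan hx1 hx2]
  constructor
  · -- h < θ : arctan((T-s)/(1-sT)) < arctan T
    have hlt : (T - s) / (1 - s * T) < T := by
      rw [div_lt_iff₀ hden]
      nlinarith [mul_pos hs0 (mul_pos (by linarith : (0:ℝ) < 1 - T) (by linarith : (0:ℝ) < 1 + T))]
    have : Real.arctan (((ν + 1) * T + (ν - 1)) / ((ν - 1) * T + (ν + 1)))
        < π * θ / 2 := by
      rw [harg, hθeq]
      exact Real.arctan_strictMono hlt
    have h2 : h ν θ < θ := by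
      unfold h
      rw [← hT]
      calc (2 / π) * Real.arctan (((ν + 1) * T + (ν - 1)) / ((ν - 1) * T + (ν + 1)))
          < (2 / π) * (π * θ / 2) := by
            apply mul_lt_mul_of_pos_left this (by positivity)
        _ = θ := by field_simp
    linarith
  · -- θ - h < 1 : arctan(...) > -π/4
    have hgt : -1 < (T - s) / (1 - s * T) := by
      rw [lt_div_iff₀ hden]; nlinarith
    have harctan : -(π/4) < Real.arctan (((ν + 1) * T + (ν - 1)) / ((ν - 1) * T + (ν + 1))) := by
      rw [harg]
      have := Real.arctan_strictMono hgt
      rwa [show Real.arctan (-1) = -(π/4) by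
        rw [Real.arctan_neg, Real.arctan_one]] at this
    have h2 : -(1/2 : ℝ) < h ν θ := by
      unfold h
      rw [← hT]
      have : (2 / π) * (-(π/4)) < (2 / π) *
          Real.arctan (((ν + 1) * T + (ν - 1)) / ((ν - 1) * T + (ν + 1))) :=
        mul_lt_mul_of_pos_left harctan (by positivity)
      calc -(1/2 : ℝ) = (2 / π) * (-(π/4)) := by field_simp; ring
        _ < _ := this
    linarith
end

section
/- For 0 < δ < 1, ν = (1-√δ)/(1+√δ), and θ ∈ (-1/2, 1/2), V'_δ(θ) = h_ν(θ) - 2θ + h_{1/ν}(θ), where V'_δ(θ) = -(2/π) arctan( δ sin(2πθ) / (1 + δ cos(2πθ)) ). -/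
open Real

noncomputable def Vd' (δ θ : ℝ) : ℝ :=
  -(2 / π) * arctan (δ * sin (2 * π * θ) / (1 + δ * cos (2 * π * θ)))

/-!
With `s = √δ` and `t = tan (πθ/2)`, the Möbius maps in `h_ν` and `h_{1/ν}` reduce to
`(t - s)/(1 - s t)` and `(t + s)/(1 + s t)`. The addition formula for `arctan` combines the two
into `arctan ((1 - δ)/(1 + δ) · tan πθ)`, and a second application of it shows that this plus
`arctan (δ sin 2πθ / (1 + δ cos 2πθ))` equals `πθ`.
-/

lemma h_sub_div_add (s θ : ℝ) (hs : 1 + s ≠ 0) :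
    h ((1 - s) / (1 + s)) θ =
      (2 / π) * arctan ((tan (π * θ / 2) - s) / (1 - s * tan (π * θ / 2))) := by
  set t := tan (π * θ / 2)
  have hnum : ((1 - s) / (1 + s) + 1) * t + ((1 - s) / (1 + s) - 1) =
      2 / (1 + s) * (t - s) := by
    field_simp; ring
  have hden : ((1 - s) / (1 + s) - 1) * t + ((1 - s) / (1 + s) + 1) =
      2 / (1 + s) * (1 - s * t) := by
    field_simp; ring
  rw [h, hnum, hden, mul_div_mul_left _ _ (by positivity)]

lemma h_add_div_sub (s θ : ℝ) (hs : 1 - s ≠ 0) :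
    h (1 / ((1 - s) / (1 + s))) θ =
      (2 / π) * arctan ((tan (π * θ / 2) + s) / (1 + s * tan (π * θ / 2))) := by
  rw [one_div_div]
  convert h_sub_div_add (-s) θ (by rwa [← sub_eq_add_neg]) using 4 <;> ring

lemma sq_tan_lt_one {x : ℝ} (hx : x ∈ Set.Ioo (-(π / 4)) (π / 4)) : tan x ^ 2 < 1 := by
  obtain ⟨hx₁, hx₂⟩ := hx
  have := pi_pos
  rw [sq_lt_one_iff_abs_lt_one, abs_lt, ← tan_pi_div_four, ← tan_neg]
  exact ⟨tan_lt_tan_of_lt_of_lt_pi_div_two (by linarith) (by linarith) hx₁,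
    tan_lt_tan_of_lt_of_lt_pi_div_two (by linarith) (by linarith) hx₂⟩

lemma arctan_sub_div_add_arctan_add_div {s t : ℝ} (ht : t ^ 2 < 1) (hst : (s * t) ^ 2 < 1) :
    arctan ((t - s) / (1 - s * t)) + arctan ((t + s) / (1 + s * t)) =
      arctan ((1 - s ^ 2) / (1 + s ^ 2) * (2 * t / (1 - t ^ 2))) := by
  have h₁ : 0 < 1 - s * t := by nlinarith
  have h₂ : 0 < 1 + s * t := by nlinarith
  have h₃ : 0 < 1 - t ^ 2 := by linarith
  have hprod : 1 - (t - s) / (1 - s * t) * ((t + s) / (1 + s * t)) =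
      (1 + s ^ 2) * (1 - t ^ 2) / ((1 - s * t) * (1 + s * t)) := by
    rw [div_mul_div_comm, one_sub_div (mul_pos h₁ h₂).ne']
    ring
  have hprod_pos : 0 < (1 + s ^ 2) * (1 - t ^ 2) / ((1 - s * t) * (1 + s * t)) := by positivity
  rw [arctan_add (by linarith), hprod, div_add_div _ _ h₁.ne' h₂.ne',
    div_div_div_cancel_right₀ (mul_pos h₁ h₂).ne', div_mul_div_comm]
  congr 1
  ring

lemma arctan_mul_add_arctan_div {δ : ℝ} (hδ₁ : -1 < δ) (hδ₂ : δ ≤ 1) (u : ℝ) :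
    arctan ((1 - δ) / (1 + δ) * u) + arctan (2 * δ * u / ((1 + δ) + (1 - δ) * u ^ 2)) =
      arctan u := by
  have h₁ : 0 < 1 + δ := by linarith
  have hD : 0 < (1 + δ) + (1 - δ) * u ^ 2 := by nlinarith [sq_nonneg u]
  have hN : 0 < (1 + δ) ^ 2 + (1 - δ) ^ 2 * u ^ 2 := by positivity
  have hprod : 1 - (1 - δ) / (1 + δ) * u * (2 * δ * u / ((1 + δ) + (1 - δ) * u ^ 2)) =
      ((1 + δ) ^ 2 + (1 - δ) ^ 2 * u ^ 2) / ((1 + δ) * ((1 + δ) + (1 - δ) * u ^ 2)) := by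
    field_simp; ring
  have hprod_pos :
      0 < ((1 + δ) ^ 2 + (1 - δ) ^ 2 * u ^ 2) / ((1 + δ) * ((1 + δ) + (1 - δ) * u ^ 2)) :=
    div_pos hN (mul_pos h₁ hD)
  rw [arctan_add (by linarith), hprod]
  congr 1
  field_simp
  ring

lemma div_one_add_mul_cos_two_mul (δ ψ : ℝ) (hψ : cos ψ ≠ 0) :
    δ * sin (2 * ψ) / (1 + δ * cos (2 * ψ)) =
      2 * δ * tan ψ / ((1 + δ) + (1 - δ) * tan ψ ^ 2) := by
  have hden : (1 + δ) + (1 - δ) * tan ψ ^ 2 = (1 + δ * cos (2 * ψ)) / cos ψ ^ 2 := by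
    rw [tan_eq_sin_div_cos, cos_two_mul]
    field_simp
    linear_combination (1 - δ) * sin_sq_add_cos_sq ψ
  rw [hden, div_div_eq_mul_div, sin_two_mul, tan_eq_sin_div_cos]
  congr 1
  field_simp

lemma arctan_mul_tan_add_arctan {δ ψ : ℝ} (hδ₁ : -1 < δ) (hδ₂ : δ ≤ 1)
    (hψ : ψ ∈ Set.Ioo (-(π / 2)) (π / 2)) :
    arctan ((1 - δ) / (1 + δ) * tan ψ) + arctan (δ * sin (2 * ψ) / (1 + δ * cos (2 * ψ))) =
      ψ := by
  rw [div_one_add_mul_cos_two_mul δ ψ (cos_pos_of_mem_Ioo hψ).ne',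
    arctan_mul_add_arctan_div hδ₁ hδ₂, arctan_tan hψ.1 hψ.2]

theorem Vd_eq_h (δ : ℝ) (hδ : 0 < δ) (hδ1 : δ < 1)
    (θ : ℝ) (hθ : θ ∈ Set.Ioo (-(1:ℝ)/2) (1/2)) :
    Vd' δ θ = h ((1 - Real.sqrt δ) / (1 + Real.sqrt δ)) θ - 2 * θ
      + h (1 / ((1 - Real.sqrt δ) / (1 + Real.sqrt δ))) θ := by
  obtain ⟨hθ₁, hθ₂⟩ := hθ
  set s := √δ
  have hs₀ : 0 < s := sqrt_pos.mpr hδ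
  have hs₂ : s ^ 2 = δ := sq_sqrt hδ.le
  have hs₁ : s < 1 := by nlinarith
  have ht : tan (π * θ / 2) ^ 2 < 1 :=
    sq_tan_lt_one ⟨by nlinarith [pi_pos], by nlinarith [pi_pos]⟩
  have hψ : π * θ ∈ Set.Ioo (-(π / 2)) (π / 2) :=
    ⟨by nlinarith [pi_pos], by nlinarith [pi_pos]⟩
  have hsum_h :=
    arctan_sub_div_add_arctan_add_div ht (by nlinarith : (s * tan (π * θ / 2)) ^ 2 < 1)
  rw [← tan_two_mul, hs₂, mul_div_cancel₀ _ two_ne_zero] at hsum_h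
  have hsum_Vd := arctan_mul_tan_add_arctan (by linarith) hδ1.le hψ
  have h2θ : 2 * θ = 2 / π * (π * θ) := by field_simp
  rw [Vd', h_sub_div_add s θ (by linarith), h_add_div_sub s θ (by linarith), h2θ,
    mul_assoc 2 π θ]
  linear_combination (-(2 / π)) * (hsum_Vd + hsum_h)
end

section
/- For 0 < δ < 1 and ν = (1-√δ)/(1+√δ), the graph r = χ⁺(θ) = θ - h_ν(θ) over θ ∈ (-1/2, 1/2) is invariant under the Suris map f_δ, and on this graph f_δ conjugates to h_{1/ν}; explicitly, f_δ(θ, χ⁺(θ)) = (h_{1/ν}(θ), χ⁺(h_{1/ν}(θ))). -/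
open Real

noncomputable def suris (δ : ℝ) (p : ℝ × ℝ) : ℝ × ℝ :=
  (p.1 + p.2 + Vd' δ p.1, p.2 + Vd' δ p.1)

/-!
In the coordinate `t = tan (π θ / 2)` the map `h ν` is the Möbius map
`t ↦ ((ν + 1) t + (ν - 1)) / ((ν - 1) t + (ν + 1))`, which the Cayley transform `u = (1 + t) / (1 - t)`
conjugates to `u ↦ ν u`; hence `h ν ∘ h μ = h (ν μ)`, and `h ν ∘ h ν⁻¹ = id`.
Both components of the claim then reduce to the single identity
`h ν θ + h ν⁻¹ θ = 2 θ + Vd' δ θ`. The arctan addition formula turns the left side into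
`(2 / π) arctan (c w)` with `w = tan (π θ)` and `c = 2 ν / (1 + ν²) = (1 - δ) / (1 + δ)`, the double-angle
formulas give `Vd' δ θ = -(2 / π) arctan (2 δ w / ((1 + δ) + (1 - δ) w²))`, and one more use of the
addition formula matches the two.
-/

open Set

noncomputable def cayleyScale (ν t : ℝ) : ℝ :=
  ((ν + 1) * t + (ν - 1)) / ((ν - 1) * t + (ν + 1))

section

variable {ν μ t θ : ℝ}

lemma h_eq_arctan_cayleyScale (ν θ : ℝ) :
    h ν θ = 2 / π * arctan (cayleyScale ν (tan (π * θ / 2))) := rfl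

lemma cayleyScale_denom_pos (hν : 0 < ν) (ht : t ∈ Ioo (-1) 1) :
    0 < (ν - 1) * t + (ν + 1) := by
  nlinarith [ht.1, ht.2]

lemma cayleyScale_cayleyScale (hμ : (μ - 1) * t + (μ + 1) ≠ 0) :
    cayleyScale ν (cayleyScale μ t) = cayleyScale (ν * μ) t := by
  unfold cayleyScale
  rw [← mul_div_mul_right ((ν + 1) * _ + _) _ hμ,
    ← mul_div_mul_left ((ν * μ + 1) * t + _) _ (two_ne_zero' ℝ)]
  congr 1 <;> simp only [add_mul, mul_assoc, div_mul_cancel₀ _ hμ] <;> ring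

lemma cayleyScale_one : cayleyScale 1 t = t := by
  simp [cayleyScale]

lemma tan_pi_mul_div_two_mem_Ioo (hθ : θ ∈ Ioo (-1 / 2) (1 / 2)) :
    tan (π * θ / 2) ∈ Ioo (-1) 1 := by
  obtain ⟨hθ₁, hθ₂⟩ := hθ
  have hπ := pi_pos
  constructor
  · rw [← neg_neg (tan _), ← tan_neg, neg_lt_neg_iff, ← tan_pi_div_four]
    exact tan_lt_tan_of_lt_of_lt_pi_div_two (by nlinarith) (by linarith) (by nlinarith)
  · rw [← tan_pi_div_four]
    exact tan_lt_tan_of_lt_of_lt_pi_div_two (by nlinarith) (by linarith) (by nlinarith)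

lemma h_h (hμ : 0 < μ) (hθ : θ ∈ Ioo (-1 / 2) (1 / 2)) : h ν (h μ θ) = h (ν * μ) θ := by
  have hcancel : π * (2 / π * arctan (cayleyScale μ (tan (π * θ / 2)))) / 2 =
      arctan (cayleyScale μ (tan (π * θ / 2))) := by
    field_simp
  rw [h_eq_arctan_cayleyScale, h_eq_arctan_cayleyScale, hcancel, tan_arctan,
    cayleyScale_cayleyScale (cayleyScale_denom_pos hμ (tan_pi_mul_div_two_mem_Ioo hθ)).ne',
    h_eq_arctan_cayleyScale]

lemma h_one (hθ : θ ∈ Ioo (-1) 1) : h 1 θ = θ := by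
  have hπ := pi_pos
  have h₁ : -(π / 2) < π * θ / 2 := by nlinarith [hθ.1]
  have h₂ : π * θ / 2 < π / 2 := by nlinarith [hθ.2]
  rw [h_eq_arctan_cayleyScale, cayleyScale_one, arctan_tan h₁ h₂]
  field_simp

lemma cayleyScale_inv (hν : ν ≠ 0) :
    cayleyScale ν⁻¹ t = ((ν + 1) * t - (ν - 1)) / ((ν + 1) - (ν - 1) * t) := by
  unfold cayleyScale
  rw [← mul_div_mul_left _ _ hν]
  congr 1 <;> field_simp <;> ring

lemma arctan_cayleyScale_add_arctan_cayleyScale_inv (hν : 0 < ν) (ht : t ∈ Ioo (-1) 1) :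
    arctan (cayleyScale ν t) + arctan (cayleyScale ν⁻¹ t) =
      arctan (2 * ν / (1 + ν ^ 2) * (2 * t / (1 - t ^ 2))) := by
  obtain ⟨ht₁, ht₂⟩ := ht
  have hD₁ : 0 < (ν - 1) * t + (ν + 1) := by nlinarith
  have hD₂ : 0 < (ν + 1) - (ν - 1) * t := by nlinarith
  have ht : 0 < 1 - t ^ 2 := by nlinarith
  have hsum : ((ν + 1) * t + (ν - 1)) * ((ν + 1) - (ν - 1) * t) +
      ((ν - 1) * t + (ν + 1)) * ((ν + 1) * t - (ν - 1)) = 8 * ν * t := by ring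
  have hdiff : ((ν - 1) * t + (ν + 1)) * ((ν + 1) - (ν - 1) * t) -
      ((ν + 1) * t + (ν - 1)) * ((ν + 1) * t - (ν - 1)) = 2 * (1 + ν ^ 2) * (1 - t ^ 2) := by ring
  rw [cayleyScale, cayleyScale_inv hν.ne', arctan_add]
  · rw [div_add_div _ _ hD₁.ne' hD₂.ne', div_mul_div_comm, one_sub_div (by positivity),
      div_div_div_cancel_right₀ (by positivity), hsum, hdiff]
    congr 1
    field_simp
    ring
  · rw [div_mul_div_comm, div_lt_one (by positivity)]
    nlinarith [mul_pos (mul_pos (by linarith : (0:ℝ) < 1 - t) (by linarith : (0:ℝ) < 1 + t))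
      (by positivity : (0:ℝ) < (1 + ν) ^ 2 + (1 - ν) ^ 2)]

lemma h_add_h_inv_eq_arctan (hν : 0 < ν) (hθ : θ ∈ Ioo (-1 / 2) (1 / 2)) :
    h ν θ + h ν⁻¹ θ = 2 / π * arctan (2 * ν / (1 + ν ^ 2) * tan (π * θ)) := by
  rw [h_eq_arctan_cayleyScale, h_eq_arctan_cayleyScale, ← mul_add,
    arctan_cayleyScale_add_arctan_cayleyScale_inv hν (tan_pi_mul_div_two_mem_Ioo hθ),
    ← tan_two_mul, mul_div_cancel₀ _ two_ne_zero]

end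

lemma arctan_sub_arctan_one_sub_div_one_add_mul {δ : ℝ} (hδ₀ : -1 < δ) (hδ₁ : δ ≤ 1) (w : ℝ) :
    arctan w - arctan ((1 - δ) / (1 + δ) * w) =
      arctan (2 * δ * w / ((1 + δ) + (1 - δ) * w ^ 2)) := by
  have hc : 0 ≤ (1 - δ) / (1 + δ) * w ^ 2 := by
    apply mul_nonneg (div_nonneg _ _) (sq_nonneg w) <;> linarith
  have hD : 0 < (1 + δ) + (1 - δ) * w ^ 2 := by nlinarith [sq_nonneg w]
  have h1 : 1 + δ ≠ 0 := by linarith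
  rw [sub_eq_add_neg, ← arctan_neg, arctan_add (by nlinarith)]
  congr 1
  rw [div_eq_div_iff (by nlinarith) hD.ne']
  field_simp
  ring

lemma Vd'_eq_arctan_tan (δ : ℝ) {θ : ℝ} (hθ : cos (π * θ) ≠ 0) :
    Vd' δ θ = -(2 / π) *
      arctan (2 * δ * tan (π * θ) / ((1 + δ) + (1 - δ) * tan (π * θ) ^ 2)) := by
  rw [Vd', tan_eq_sin_div_cos, ← mul_div_mul_right (2 * δ * _) _ (pow_ne_zero 2 hθ),
    show 2 * π * θ = 2 * (π * θ) by ring, sin_two_mul, cos_two_mul]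
  congr 3
  · field_simp
  · field_simp
    linear_combination (δ - 1) * sin_sq_add_cos_sq (π * θ)

lemma h_add_h_inv {ν θ : ℝ} (hν : 0 < ν) (hθ : θ ∈ Ioo (-1 / 2) (1 / 2)) :
    h ν θ + h ν⁻¹ θ = 2 * θ + Vd' (((1 - ν) / (1 + ν)) ^ 2) θ := by
  have hπ := pi_pos
  have hπθ : π * θ ∈ Ioo (-(π / 2)) (π / 2) := ⟨by nlinarith [hθ.1], by nlinarith [hθ.2]⟩
  have h2θ : 2 * θ = 2 / π * arctan (tan (π * θ)) := by
    rw [arctan_tan hπθ.1 hπθ.2]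
    field_simp
  have hδ₀ : -1 < ((1 - ν) / (1 + ν)) ^ 2 := by linarith [sq_nonneg ((1 - ν) / (1 + ν))]
  have hδ₁ : ((1 - ν) / (1 + ν)) ^ 2 ≤ 1 := by
    rw [sq_le_one_iff_abs_le_one, abs_le, le_div_iff₀ (by linarith), div_le_one (by linarith)]
    constructor <;> linarith
  have hc : 2 * ν / (1 + ν ^ 2) =
      (1 - ((1 - ν) / (1 + ν)) ^ 2) / (1 + ((1 - ν) / (1 + ν)) ^ 2) := by
    field_simp
    ring
  rw [h_add_h_inv_eq_arctan hν hθ, Vd'_eq_arctan_tan _ (cos_pos_of_mem_Ioo hπθ).ne', h2θ, hc,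
    ← arctan_sub_arctan_one_sub_div_one_add_mul hδ₀ hδ₁]
  ring

theorem chi_plus_invariant (δ : ℝ) (hδ : 0 < δ) (hδ1 : δ < 1)
    (θ : ℝ) (hθ : θ ∈ Set.Ioo (-(1:ℝ)/2) (1/2)) :
    suris δ (θ, θ - h ((1 - Real.sqrt δ) / (1 + Real.sqrt δ)) θ) =
      (h (1 / ((1 - Real.sqrt δ) / (1 + Real.sqrt δ))) θ,
       h (1 / ((1 - Real.sqrt δ) / (1 + Real.sqrt δ))) θ
         - h ((1 - Real.sqrt δ) / (1 + Real.sqrt δ))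
             (h (1 / ((1 - Real.sqrt δ) / (1 + Real.sqrt δ))) θ)) := by
  have hs : √δ < 1 := (sqrt_lt' one_pos).2 (by simpa using hδ1)
  set ν := (1 - √δ) / (1 + √δ)
  have hν : 0 < ν := div_pos (by linarith) (by positivity)
  have hνδ : ((1 - ν) / (1 + ν)) ^ 2 = δ := by
    have : (1 - ν) / (1 + ν) = √δ := by
      simp only [ν]
      field_simp
      ring
    rw [this, sq_sqrt hδ.le]
  have hcancel : h ν (h (1 / ν) θ) = θ := by
    rw [h_h (one_div_pos.2 hν) hθ, mul_one_div_cancel hν.ne',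
      h_one ⟨by linarith [hθ.1], by linarith [hθ.2]⟩]
  have hsum := h_add_h_inv hν hθ
  rw [hνδ, ← one_div] at hsum
  rw [hcancel, suris, Prod.mk.injEq]
  constructor <;> linarith
end

section
/- For 0 < ν < 1 and z_p = (1-√ν)/(1+√ν), L̄(z_p) = 8 Σ_{t=0}^{∞} ν^{2t+1}/(1+ν^{2t+1})², where L̄(z) = Σ_{t∈ℤ} α_t(z) with α_t(z) = 4 ν^{2t} (1-z²)² / ((1-z)² + ν^{2t}(1+z)²)². -/
open Real

noncomputable def α (ν : ℝ) (t : ℤ) (z : ℝ) : ℝ :=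
  4 * ν ^ (2 * t) * (1 - z ^ 2) ^ 2 / ((1 - z) ^ 2 + ν ^ (2 * t) * (1 + z) ^ 2) ^ 2

lemma alpha_aux (s a : ℝ) (hs0 : 0 < s) (ha : 0 < a) :
    4 * a * (1 - ((1 - s) / (1 + s)) ^ 2) ^ 2 /
      ((1 - (1 - s) / (1 + s)) ^ 2 + a * (1 + (1 - s) / (1 + s)) ^ 2) ^ 2 =
      4 * (s ^ 2) * a / (s ^ 2 + a) ^ 2 := by
  have h1s : (1 : ℝ) + s ≠ 0 := by positivity
  have h1z : 1 - (1 - s) / (1 + s) = 2 * s / (1 + s) := by field_simp; ring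
  have h2z : 1 + (1 - s) / (1 + s) = 2 / (1 + s) := by field_simp; ring
  rw [show (1 - ((1 - s) / (1 + s)) ^ 2) = (1 - (1 - s) / (1 + s)) * (1 + (1 - s) / (1 + s)) by
    ring, h1z, h2z]
  have hd : (2 * s / (1 + s)) ^ 2 + a * (2 / (1 + s)) ^ 2 ≠ 0 := by positivity
  have hd2 : s ^ 2 + a ≠ 0 := by positivity
  field_simp

lemma alpha_key (ν : ℝ) (hν : 0 < ν) (t : ℤ) :
    α ν t ((1 - Real.sqrt ν) / (1 + Real.sqrt ν)) =
      4 * ν * ν ^ (2 * t) / (ν + ν ^ (2 * t)) ^ 2 := by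
  have hs0 : 0 < Real.sqrt ν := Real.sqrt_pos.mpr hν
  have hs2 : Real.sqrt ν ^ 2 = ν := Real.sq_sqrt hν.le
  have ha : (0 : ℝ) < ν ^ (2 * t) := zpow_pos hν _
  have := alpha_aux (Real.sqrt ν) (ν ^ (2 * t)) hs0 ha
  rw [hs2] at this
  rw [α, this]

theorem Lbar_at_zp (ν : ℝ) (hν : 0 < ν) (hν1 : ν < 1) :
    (∑' t : ℤ, α ν t ((1 - Real.sqrt ν) / (1 + Real.sqrt ν))) =
      8 * ∑' t : ℕ, ν ^ (2 * t + 1) / (1 + ν ^ (2 * t + 1)) ^ 2 := by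
  set zp := (1 - Real.sqrt ν) / (1 + Real.sqrt ν) with hzp
  set h : ℕ → ℝ := fun n ↦ ν ^ (2 * n + 1) / (1 + ν ^ (2 * n + 1)) ^ 2 with hh
  have hpos : ∀ n : ℕ, (0 : ℝ) < 1 + ν ^ (2 * n + 1) := fun n ↦ by positivity
  have hsum : Summable h := by
    apply Summable.of_nonneg_of_le (fun n ↦ by positivity) (fun n ↦ ?_)
      (summable_geometric_of_lt_one hν.le hν1)
    have h1 : (1:ℝ) ≤ (1 + ν ^ (2 * n + 1)) ^ 2 := by nlinarith [pow_pos hν (2*n+1)]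
    calc h n ≤ ν ^ (2 * n + 1) := div_le_self (pow_pos hν _).le h1
      _ ≤ ν ^ n := pow_le_pow_of_le_one hν.le hν1.le (by omega)
  set S := ∑' n, h n with hS
  have hval1 : ∀ n : ℕ, α ν ((n : ℤ) + 1) zp = 4 * h n := by
    intro n
    rw [alpha_key ν hν, hh]
    have he : ν ^ (2 * ((n : ℤ) + 1)) = ν ^ (2 * n + 2 : ℕ) := by
      rw [← zpow_natCast]; norm_num; ring_nf
    rw [he]
    have := hpos n
    field_simp
    ring
  have hval2 : ∀ n : ℕ, α ν (-((n : ℤ) + 1) + 1) zp = 4 * h n := by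
    intro n
    rw [alpha_key ν hν, hh]
    have he : ν ^ (2 * (-((n : ℤ) + 1) + 1)) = (ν ^ (2 * n : ℕ))⁻¹ := by
      rw [← zpow_natCast, ← zpow_neg]; norm_num
    rw [he]
    have h2 := pow_pos hν (2 * n)
    have := hpos n
    field_simp
    ring
  have hS4 : HasSum (fun n : ℕ ↦ (4 : ℝ) * h n) (4 * S) := hsum.hasSum.mul_left 4
  have H : HasSum (fun t : ℤ ↦ α ν (t + 1) zp) (4 * S + 4 * S) := by
    apply HasSum.of_nat_of_neg_add_one
    · convert hS4 using 2 with n; exact hval1 n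
    · convert hS4 using 2 with n; exact hval2 n
  have H2 : HasSum (fun t : ℤ ↦ α ν t zp) (4 * S + 4 * S) := by
    apply (Equiv.hasSum_iff (f := fun t : ℤ ↦ α ν t zp) (a := 4 * S + 4 * S)
      (Equiv.addRight (1 : ℤ))).mp
    exact H
  rw [H2.tsum_eq]; ring
end

section
/- For 0 < ν < 1, the difference (1 + 8 Σ_{t=1}^{∞} ν^{2t}/(1+ν^{2t})²) − 8 Σ_{t=0}^{∞} ν^{2t+1}/(1+ν^{2t+1})² equals Γ(ν) := 1 + 8 Σ_{k=1}^{∞} (-1)^k k ν^k/(1+ν^k). -/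
/-!
Both sides are the two iterated sums of the absolutely convergent double series
`∑_{n,m ≥ 0} (-1)^(n+m) (m+1) ν^((n+1)(m+1))`. Summing over `m` first, the series
`∑_m (-1)^m (m+1) y^(m+1) = y / (1+y)^2` at `y = ν^(n+1)` produces the alternating series
`∑_n (-1)^n ν^(n+1) / (1+ν^(n+1))^2`, whose even and odd parts are the two sums on the left.
Summing over `n` first, the geometric series `∑_n (-1)^n y^(n+1) = y / (1+y)` at `y = ν^(m+1)`
produces the Lambert series defining `Γ(ν)`.
-/

lemma tsum_neg_one_pow_mul {α : Type*} [Ring α] [UniformSpace α] [IsUniformAddGroup α]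
    [CompleteSpace α] [T2Space α] {f : ℕ → α} (hf : Summable f) :
    ∑' n, (-1) ^ n * f n = ∑' k, f (2 * k) - ∑' k, f (2 * k + 1) := by
  have he : Summable fun k => f (2 * k) :=
    hf.comp_injective (mul_right_injective₀ (two_ne_zero' ℕ))
  have ho : Summable fun k => f (2 * k + 1) :=
    hf.comp_injective ((add_left_injective 1).comp (mul_right_injective₀ (two_ne_zero' ℕ)))
  rw [sub_eq_add_neg]
  refine (HasSum.even_add_odd (f := fun n => (-1) ^ n * f n) ?_ ?_).tsum_eq
  · simpa [pow_mul] using he.hasSum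
  · simpa [pow_succ, pow_mul] using ho.hasSum.neg

section LambertSeries

variable {𝕜 : Type*} [NormedField 𝕜] {x : 𝕜}

lemma hasSum_neg_one_pow_mul_succ_mul_pow_succ (hx : ‖x‖ < 1) :
    HasSum (fun m : ℕ => (-1) ^ m * (m + 1) * x ^ (m + 1)) (x / (1 + x) ^ 2) := by
  have h := hasSum_coe_mul_geometric_of_norm_lt_one (r := -x) (by rwa [norm_neg])
  rw [← hasSum_nat_add_iff' 1] at h
  have e : x / (1 + x) ^ 2 = -(-x / (1 - -x) ^ 2 - ∑ i ∈ Finset.range 1, (i : 𝕜) * (-x) ^ i) := by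
    simp [neg_div]
  rw [e]
  refine h.neg.congr_fun fun m => ?_
  push_cast
  ring

lemma hasSum_neg_one_pow_mul_pow_succ (hx : ‖x‖ < 1) :
    HasSum (fun n : ℕ => (-1) ^ n * x ^ (n + 1)) (x / (1 + x)) := by
  rw [div_eq_mul_inv, ← sub_neg_eq_add]
  refine ((hasSum_geometric_of_norm_lt_one (ξ := -x) (by rwa [norm_neg])).mul_left x).congr_fun
    fun n => ?_
  ring

def lambertTerm (x : 𝕜) (p : ℕ × ℕ) : 𝕜 :=
  (-1) ^ (p.1 + p.2) * (p.2 + 1) * x ^ ((p.1 + 1) * (p.2 + 1))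

lemma norm_lambertTerm_le (hx : ‖x‖ ≤ 1) (n m : ℕ) :
    ‖lambertTerm x (n, m)‖ ≤ ‖x‖ ^ n * ((m + 1) * ‖x‖ ^ (m + 1)) := by
  have hm : ‖((m : 𝕜) + 1)‖ ≤ m + 1 := by
    simpa using Nat.norm_cast_le (α := 𝕜) (m + 1)
  have hpow : ‖x‖ ^ ((n + 1) * (m + 1)) ≤ ‖x‖ ^ (n + (m + 1)) :=
    pow_le_pow_of_le_one (norm_nonneg x) hx (by nlinarith)
  calc ‖lambertTerm x (n, m)‖ = ‖((m : 𝕜) + 1)‖ * ‖x‖ ^ ((n + 1) * (m + 1)) := by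
        simp [lambertTerm, norm_pow]
    _ ≤ (m + 1) * ‖x‖ ^ (n + (m + 1)) := by gcongr
    _ = _ := by ring

lemma summable_lambertTerm [CompleteSpace 𝕜] (hx : ‖x‖ < 1) : Summable (lambertTerm x) := by
  have hgeom := summable_geometric_of_lt_one (norm_nonneg x) hx
  have hrow : Summable fun m : ℕ => ((m : ℝ) + 1) * ‖x‖ ^ (m + 1) :=
    (((summable_pow_mul_geometric_of_norm_lt_one 1 (r := ‖x‖) (by simpa using hx)).add
      hgeom).mul_right ‖x‖).congr fun m => by ring
  exact .of_norm_bounded (hgeom.mul_of_nonneg hrow (fun _ => by positivity) fun _ => by positivity)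
    fun ⟨n, m⟩ => norm_lambertTerm_le hx.le n m

lemma hasSum_lambertTerm_fst (hx : ‖x‖ < 1) (n : ℕ) :
    HasSum (fun m => lambertTerm x (n, m)) ((-1) ^ n * (x ^ (n + 1) / (1 + x ^ (n + 1)) ^ 2)) := by
  have h := (hasSum_neg_one_pow_mul_succ_mul_pow_succ (x := x ^ (n + 1))
    (by rw [norm_pow]; exact pow_lt_one₀ (norm_nonneg x) hx n.succ_ne_zero)).mul_left ((-1) ^ n)
  refine h.congr_fun fun m => ?_
  simp only [lambertTerm, pow_add, pow_mul]
  ring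

lemma hasSum_lambertTerm_snd (hx : ‖x‖ < 1) (m : ℕ) :
    HasSum (fun n => lambertTerm x (n, m))
      ((-1 : 𝕜) ^ m * (m + 1) * x ^ (m + 1) / (1 + x ^ (m + 1))) := by
  have h := (hasSum_neg_one_pow_mul_pow_succ (x := x ^ (m + 1))
    (by rw [norm_pow]; exact pow_lt_one₀ (norm_nonneg x) hx m.succ_ne_zero)).mul_left
      ((-1 : 𝕜) ^ m * (m + 1))
  rw [mul_div_assoc]
  refine h.congr_fun fun n => ?_
  simp only [lambertTerm, pow_add, pow_mul]
  ring

theorem hasSum_neg_one_pow_mul_pow_succ_div_sq [CompleteSpace 𝕜] (hx : ‖x‖ < 1) :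
    HasSum (fun n : ℕ => (-1 : 𝕜) ^ n * (x ^ (n + 1) / (1 + x ^ (n + 1)) ^ 2))
      (∑' m : ℕ, (-1 : 𝕜) ^ m * (m + 1) * x ^ (m + 1) / (1 + x ^ (m + 1))) := by
  have hF := (summable_lambertTerm hx).hasSum
  rw [(((Equiv.prodComm ℕ ℕ).hasSum_iff.mpr hF).prod_fiberwise (hasSum_lambertTerm_snd hx)).tsum_eq]
  exact hF.prod_fiberwise (hasSum_lambertTerm_fst hx)

end LambertSeries

theorem Lbar_diff_eq_Gamma (ν : ℝ) (hν : 0 < ν) (hν1 : ν < 1) :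
    (1 + 8 * ∑' t : ℕ, ν ^ (2 * t + 2) / (1 + ν ^ (2 * t + 2)) ^ 2)
      - 8 * ∑' t : ℕ, ν ^ (2 * t + 1) / (1 + ν ^ (2 * t + 1)) ^ 2 =
    1 + 8 * ∑' k : ℕ, (-1 : ℝ) ^ (k + 1) * (k + 1) * ν ^ (k + 1) / (1 + ν ^ (k + 1)) := by
  have hx : ‖ν‖ < 1 := by rw [Real.norm_eq_abs, abs_lt]; constructor <;> linarith
  have h := hasSum_neg_one_pow_mul_pow_succ_div_sq hx
  have ha : Summable fun n : ℕ => ν ^ (n + 1) / (1 + ν ^ (n + 1)) ^ 2 := by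
    simpa [← mul_assoc, ← pow_add, ← two_mul, pow_mul] using h.summable.alternating
  have hsplit := tsum_neg_one_pow_mul ha
  rw [h.tsum_eq] at hsplit
  have hsign : ∑' k : ℕ, (-1 : ℝ) ^ (k + 1) * (k + 1) * ν ^ (k + 1) / (1 + ν ^ (k + 1)) =
      -∑' m : ℕ, (-1 : ℝ) ^ m * (m + 1) * ν ^ (m + 1) / (1 + ν ^ (m + 1)) := by
    rw [← tsum_neg]
    exact tsum_congr fun k => by ring
  rw [hsign, hsplit]
  ring
end
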